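/- arXiv:1005.1631 — 3 statements merged into one kernel-verified Lean document; each statement's English description precedes it below -/
import Mathlib

section
/- Let H(x) = Σ_{n≥0} P_n(α,t)·x^{n+1}/(n+1)! be the exponential generating function, as a formal power series over ℚ[α,t], of the descent polynomials P_n(α,t) = Σ_{k=0}^{n} A(n+1,k)·α^k·t^{n-k}. Then (α·exp(tx) − t·exp(αx))·H(x) = exp(αx) − exp(tx), where exp(ax) denotes the formal power series Σ_{n≥0} a^n·x^n/n!. Equivalently, H(x) = (e^{αx} − e^{tx})/(α·e^{tx} − t·e^{αx}). -/
/-!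
Cutting a permutation at its largest letter `N` writes it as `L ++ N :: R`, and its descents are
those of `L ++ [N]` together with those of `N :: R`: the word `L` contributes its own weight, times
`t` if `L ≠ []`, and `R` its own weight, times `α` if `R ≠ []`. The descent polynomial of a set of
letters depends only on its size, so summing over the letters of `L` gives a binomial convolution,
which for the exponential generating function reads `H' = (1 + tH)(1 + αH)`. Then
`W = (α e^{tx} - t e^{αx}) H - (e^{αx} - e^{tx})` satisfies `W' = (α + t + αtH) W` and `W(0) = 0`,
which forces `W = 0`.
-/

open Finset MvPolynomial
open scoped Classical

/-- The number of descents of a permutation `σ` of `Fin m`. -/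
noncomputable def numDescents (m : ℕ) (σ : Equiv.Perm (Fin m)) : ℕ :=
  ((Finset.range m).filter fun i =>
    ∃ h : i + 1 < m, σ ⟨i + 1, h⟩ < σ ⟨i, Nat.lt_of_succ_lt h⟩).card

/-- The Eulerian number `A(m,k)`: the number of permutations of `{1,…,m}` with exactly
`k` descents. -/
noncomputable def eulerian (m k : ℕ) : ℕ :=
  ((Finset.univ : Finset (Equiv.Perm (Fin m))).filter fun σ => numDescents m σ = k).card

/-- The h-polynomial of the permutohedron `Pe^n`:
`P_n(α,t) = Σ_{k=0}^{n} A(n+1,k)·α^k·t^{n-k}`. -/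
noncomputable def permutoH (n : ℕ) : MvPolynomial (Fin 2) ℚ :=
  ∑ k ∈ Finset.range (n + 1),
    MvPolynomial.C ((eulerian (n + 1) k : ℚ)) *
      MvPolynomial.X 0 ^ k * MvPolynomial.X 1 ^ (n - k)

/-- The exponential generating function `H(x) = Σ_{n≥0} P_n(α,t)·x^{n+1}/(n+1)!`,
i.e. the coefficient of `x^m` is `P_{m-1}/m!` for `m ≥ 1` and `0` for `m = 0`. -/
noncomputable def permutoEGF : PowerSeries (MvPolynomial (Fin 2) ℚ) :=
  PowerSeries.mk fun m =>
    if m = 0 then 0 else MvPolynomial.C ((m.factorial : ℚ)⁻¹) * permutoH (m - 1)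

/-- The formal power series `exp(a·x) = Σ_{n≥0} aⁿ·xⁿ/n!` with `a ∈ ℚ[α,t]`. -/
noncomputable def expSeries' (a : MvPolynomial (Fin 2) ℚ) :
    PowerSeries (MvPolynomial (Fin 2) ℚ) :=
  PowerSeries.mk fun n => MvPolynomial.C ((n.factorial : ℚ)⁻¹) * a ^ n

section DescentWeight

variable {α : Type*} [LinearOrder α] {M : Type*} [CommMonoid M] (p q : M)

def descentWeight : List α → M
  | x :: y :: l => (if y < x then p else q) * descentWeight (y :: l)
  | _ => 1

variable {p q}

@[simp] lemma descentWeight_singleton (x : α) : descentWeight p q [x] = 1 := rfl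

@[simp] lemma descentWeight_cons_cons (x y : α) (l : List α) :
    descentWeight p q (x :: y :: l) = (if y < x then p else q) * descentWeight p q (y :: l) :=
  rfl

lemma descentWeight_append_cons (L R : List α) (x : α) :
    descentWeight p q (L ++ x :: R) =
      descentWeight p q (L ++ [x]) * descentWeight p q (x :: R) := by
  induction L with
  | nil => simp
  | cons a L ih =>
    cases L with
    | nil => simp
    | cons b L =>
      simp only [List.cons_append, descentWeight_cons_cons] at ih ⊢
      rw [ih, mul_assoc]

lemma descentWeight_append_singleton_of_lt {L : List α} {x : α} (hL : ∀ y ∈ L, y < x) :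
    descentWeight p q (L ++ [x]) = if L = [] then 1 else q * descentWeight p q L := by
  induction L with
  | nil => simp
  | cons a L ih =>
    cases L with
    | nil => simp [(hL a (by simp)).not_gt]
    | cons b L =>
      simp only [List.cons_append, descentWeight_cons_cons, List.mem_cons,
        forall_eq_or_imp] at hL ih ⊢
      rw [ih hL.2]
      simp [mul_left_comm]

lemma descentWeight_cons_of_lt {R : List α} {x : α} (hR : ∀ y ∈ R, y < x) :
    descentWeight p q (x :: R) = if R = [] then 1 else p * descentWeight p q R := by
  cases R with
  | nil => simp
  | cons a R => simp [hR a (by simp)]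

lemma descentWeight_map {β : Type*} [LinearOrder β] {f : α → β} (hf : StrictMono f)
    (l : List α) : descentWeight p q (l.map f) = descentWeight p q l := by
  induction l with
  | nil => rfl
  | cons a l ih =>
    cases l with
    | nil => rfl
    | cons b l => simp_all [hf.lt_iff_lt]

lemma descentWeight_ofFn {m : ℕ} (f : Fin (m + 1) → α) :
    descentWeight p q (List.ofFn f) = ∏ i : Fin m, if f i.succ < f i.castSucc then p else q := by
  induction m with
  | zero => simp
  | succ m ih =>
    have h := ih fun i => f i.succ
    rw [List.ofFn_succ] at h
    rw [List.ofFn_succ, List.ofFn_succ, descentWeight_cons_cons, h, Fin.prod_univ_succ]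
    rfl

end DescentWeight

section Arrangements

variable {α : Type*}

def arrangements (S : Finset α) : Finset (List α) :=
  ⟨S.val.lists, Multiset.lists_nodup_finset S⟩

@[simp] lemma mem_arrangements {S : Finset α} {l : List α} :
    l ∈ arrangements S ↔ S.val = l :=
  Multiset.mem_lists_iff _ _

lemma mem_of_mem_arrangements {S : Finset α} {l : List α} (h : l ∈ arrangements S) {x : α} :
    x ∈ l ↔ x ∈ S := by
  rw [← Multiset.mem_coe, ← mem_arrangements.1 h, Finset.mem_val]

@[simp] lemma arrangements_empty : arrangements (∅ : Finset α) = {[]} := by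
  ext l
  simp [eq_comm]

lemma arrangements_map {β : Type*} (f : α ↪ β) (S : Finset α) :
    arrangements (S.map f) =
      (arrangements S).map ⟨List.map f, List.map_injective_iff.2 f.injective⟩ := by
  ext l
  simp only [mem_map, mem_arrangements, map_val, Function.Embedding.coeFn_mk]
  constructor
  · intro h
    have hl : ∀ x ∈ l, x ∈ Set.range f := fun x hx => by
      rw [← Multiset.mem_coe, ← h, Multiset.mem_map] at hx
      obtain ⟨y, -, rfl⟩ := hx
      exact ⟨y, rfl⟩
    have : CanLift β α f (· ∈ Set.range f) := ⟨fun _ => id⟩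
    lift l to List α using hl
    exact ⟨l, Multiset.map_injective f.injective (by simpa using h), rfl⟩
  · rintro ⟨l, hl, rfl⟩
    rw [hl, Multiset.map_coe]

lemma sum_arrangements_insert [DecidableEq α] {M : Type*} [AddCommMonoid M] {N : α}
    {T : Finset α} (hN : N ∉ T) (f : List α → M) :
    ∑ l ∈ arrangements (insert N T), f l =
      ∑ A ∈ T.powerset, ∑ L ∈ arrangements A, ∑ R ∈ arrangements (T \ A), f (L ++ N :: R) := by
  simp_rw [← sum_product', sum_sigma']
  symm
  refine sum_bij (fun x _ => x.2.1 ++ N :: x.2.2) ?_ ?_ ?_ fun _ _ => rfl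
  · rintro ⟨A, L, R⟩ h
    simp only [mem_sigma, mem_powerset, mem_product, mem_arrangements] at h ⊢
    obtain ⟨hA, hL, hR⟩ := h
    rw [insert_val_of_notMem hN, ← Multiset.coe_add, ← Multiset.cons_coe, ← hL, ← hR, sdiff_val,
      Multiset.add_cons, add_tsub_cancel_of_le (val_le_iff.2 hA)]
  · rintro ⟨A, L, R⟩ h ⟨A', L', R'⟩ h' heq
    simp only [mem_sigma, mem_powerset, mem_product] at h h'
    have hNL : N ∉ L := fun hm => hN (h.1 ((mem_of_mem_arrangements h.2.1).1 hm))
    have hNR : N ∉ R := fun hm => hN (mem_sdiff.1 ((mem_of_mem_arrangements h.2.2).1 hm)).1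
    obtain ⟨rfl, -, rfl⟩ := (List.append_cons_inj_of_notMem hNL hNR).1 heq
    rw [val_inj.1 ((mem_arrangements.1 h.2.1).trans (mem_arrangements.1 h'.2.1).symm)]
  · intro l hl
    rw [mem_arrangements, insert_val_of_notMem hN] at hl
    obtain ⟨L, R, rfl⟩ :=
      List.append_of_mem (Multiset.mem_coe.1 (hl ▸ Multiset.mem_cons_self N T.val))
    have hnd : (L ++ N :: R).Nodup := by
      rw [← Multiset.coe_nodup, ← hl, ← insert_val_of_notMem hN]
      exact (insert N T).nodup
    have hT : T.val = ↑L + ↑R := by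
      rw [← Multiset.cons_inj_right N, hl, ← Multiset.coe_add, ← Multiset.cons_coe,
        Multiset.add_cons]
    have hL : L.toFinset.val = L := by
      rw [List.toFinset_val, List.dedup_eq_self.2 (List.nodup_append.1 hnd).1]
    refine ⟨⟨L.toFinset, L, R⟩, ?_, rfl⟩
    simp only [mem_sigma, mem_powerset, mem_product, mem_arrangements, hL, sdiff_val, hT,
      add_tsub_cancel_left, and_true]
    rw [← val_le_iff, hL, hT]
    exact Multiset.le_add_right _ _

lemma sum_perm_ofFn {M : Type*} [AddCommMonoid M] (m : ℕ) (F : List (Fin m) → M) :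
    ∑ σ : Equiv.Perm (Fin m), F (List.ofFn σ) =
      ∑ l ∈ arrangements (univ : Finset (Fin m)), F l := by
  refine sum_bij (fun σ _ => List.ofFn σ) ?_ ?_ ?_ fun _ _ => rfl
  · intro σ _
    rw [mem_arrangements, ← Fin.univ_val_map]
    exact congrArg val (map_univ_equiv σ).symm
  · intro σ _ τ _ h
    exact Equiv.ext (congrFun (List.ofFn_injective h))
  · intro l hl
    rw [mem_arrangements] at hl
    have hnd : l.Nodup := by
      rw [← Multiset.coe_nodup, ← hl]
      exact univ.nodup
    have hlen : l.length = m := by rw [← Multiset.coe_card, ← hl, card_val, card_fin]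
    let e := hnd.getEquivOfForallMemList l fun x => by
      rw [← Multiset.mem_coe, ← hl]
      exact mem_univ x
    refine ⟨(finCongr hlen.symm).trans e, mem_univ _, List.ext_getElem (by simp [hlen]) ?_⟩
    intro i _ _
    simp [e]

end Arrangements

section DescentPoly

variable {R : Type*} [CommSemiring R] (p q : R) {α β : Type*} [LinearOrder α] [LinearOrder β]

def descentPoly (S : Finset α) : R :=
  ∑ l ∈ arrangements S, descentWeight p q l

def eulerianPoly (n : ℕ) : R :=
  descentPoly p q (univ : Finset (Fin n))

lemma descentPoly_map (f : α ↪o β) (S : Finset α) :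
    descentPoly p q (S.map f.toEmbedding) = descentPoly p q S := by
  simp [descentPoly, arrangements_map, descentWeight_map f.strictMono]

lemma descentPoly_eq_eulerianPoly_card (S : Finset α) :
    descentPoly p q S = eulerianPoly p q S.card := by
  rw [eulerianPoly, ← descentPoly_map p q (S.orderEmbOfFin rfl), map_orderEmbOfFin_univ]

lemma sum_arrangements_ite_nil (A : Finset α) (c : R) (g : List α → R) :
    ∑ L ∈ arrangements A, (if L = [] then 1 else c * g L) =
      if A = ∅ then 1 else c * ∑ L ∈ arrangements A, g L := by
  split_ifs with hA
  · simp [hA]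
  · rw [mul_sum]
    refine sum_congr rfl fun L hL => if_neg ?_
    rintro rfl
    exact hA (val_eq_zero.1 (mem_arrangements.1 hL))

lemma descentPoly_insert_of_forall_lt {N : α} {T : Finset α} (hT : ∀ x ∈ T, x < N) :
    descentPoly p q (insert N T) = ∑ A ∈ T.powerset,
      (if A = ∅ then 1 else q * descentPoly p q A) *
        (if T \ A = ∅ then 1 else p * descentPoly p q (T \ A)) := by
  rw [descentPoly, sum_arrangements_insert fun h => lt_irrefl N (hT N h)]
  refine sum_congr rfl fun A hA => ?_
  have hlt {S : Finset α} {l : List α} (hS : S ⊆ T) (hl : l ∈ arrangements S) :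
      ∀ y ∈ l, y < N :=
    fun y hy => hT y (hS ((mem_of_mem_arrangements hl).1 hy))
  rw [mem_powerset] at hA
  calc ∑ L ∈ arrangements A, ∑ R ∈ arrangements (T \ A), descentWeight p q (L ++ N :: R)
      = (∑ L ∈ arrangements A, descentWeight p q (L ++ [N])) *
          ∑ R ∈ arrangements (T \ A), descentWeight p q (N :: R) := by
        rw [sum_mul_sum]
        exact sum_congr rfl fun L _ => sum_congr rfl fun R _ => descentWeight_append_cons L R N
    _ = _ := by
        rw [sum_congr rfl fun L hL => descentWeight_append_singleton_of_lt (hlt hA hL),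
          sum_congr rfl fun R hR => descentWeight_cons_of_lt (hlt sdiff_subset hR),
          sum_arrangements_ite_nil, sum_arrangements_ite_nil, descentPoly, descentPoly]

lemma eulerianPoly_succ (n : ℕ) :
    eulerianPoly p q (n + 1) = ∑ j ∈ range (n + 1), n.choose j •
      ((if j = 0 then 1 else q * eulerianPoly p q j) *
        (if n - j = 0 then 1 else p * eulerianPoly p q (n - j))) := by
  have hsplit := descentPoly_insert_of_forall_lt p q (T := range n) (N := n) fun _ => mem_range.1
  rw [← range_add_one, descentPoly_eq_eulerianPoly_card, card_range] at hsplit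
  have hcard := sum_powerset_apply_card (x := range n) fun j =>
    (if j = 0 then 1 else q * eulerianPoly p q j) *
      (if n - j = 0 then 1 else p * eulerianPoly p q (n - j))
  rw [card_range] at hcard
  rw [hsplit, ← hcard]
  refine sum_congr rfl fun A hA => ?_
  simp only [← card_eq_zero, descentPoly_eq_eulerianPoly_card,
    card_sdiff_of_subset (mem_powerset.1 hA), card_range]

end DescentPoly

lemma numDescents_succ (n : ℕ) (σ : Equiv.Perm (Fin (n + 1))) :
    numDescents (n + 1) σ = #{i : Fin n | σ i.succ < σ i.castSucc} := by
  symm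
  refine card_bij (fun i _ => (i : ℕ)) ?_ (fun i _ j _ h => Fin.val_injective h) ?_
  · intro i hi
    simp only [mem_filter, mem_univ, true_and] at hi
    simp only [mem_filter, mem_range]
    exact ⟨by omega, by omega, hi⟩
  · intro k hk
    simp only [mem_filter, mem_range] at hk
    obtain ⟨-, h, hlt⟩ := hk
    exact ⟨⟨k, by omega⟩, by simpa using hlt, rfl⟩

lemma descentWeight_ofFn_perm {M : Type*} [CommMonoid M] (p q : M) (n : ℕ)
    (σ : Equiv.Perm (Fin (n + 1))) :
    descentWeight p q (List.ofFn σ) =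
      p ^ numDescents (n + 1) σ * q ^ (n - numDescents (n + 1) σ) := by
  have h := card_filter_add_card_filter_not (s := univ) fun i : Fin n => σ i.succ < σ i.castSucc
  rw [card_univ, Fintype.card_fin] at h
  rw [descentWeight_ofFn, prod_ite, prod_const, prod_const, numDescents_succ]
  congr 2
  omega

lemma permutoH_eq_eulerianPoly (n : ℕ) : permutoH n = eulerianPoly (X 0) (X 1) (n + 1) := by
  have hle (σ : Equiv.Perm (Fin (n + 1))) : numDescents (n + 1) σ ≤ n := by
    rw [numDescents_succ]
    exact (card_filter_le _ _).trans (by simp)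
  calc permutoH n
      = ∑ σ : Equiv.Perm (Fin (n + 1)),
          X 0 ^ numDescents (n + 1) σ * X 1 ^ (n - numDescents (n + 1) σ) := by
        rw [permutoH, ← sum_fiberwise_of_maps_to (g := numDescents (n + 1)) (t := range (n + 1))
          fun σ _ => mem_range.2 (Nat.lt_succ_of_le (hle σ))]
        refine sum_congr rfl fun k _ => ?_
        rw [sum_congr rfl fun σ hσ => by rw [(mem_filter.1 hσ).2], sum_const, eulerian,
          nsmul_eq_mul, ← C_eq_coe_nat, mul_assoc]
    _ = ∑ σ : Equiv.Perm (Fin (n + 1)), descentWeight (X 0) (X 1) (List.ofFn σ) := by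
        simp only [descentWeight_ofFn_perm]
    _ = eulerianPoly (X 0) (X 1) (n + 1) := sum_perm_ofFn _ _

theorem PowerSeries.eq_zero_of_derivative_eq_mul {R : Type*} [CommRing R] [IsAddTorsionFree R]
    {f c : PowerSeries R} (hf : PowerSeries.derivative R f = c * f)
    (h0 : PowerSeries.constantCoeff f = 0) : f = 0 := by
  ext n
  induction n using Nat.strong_induction_on with
  | _ n ih =>
  cases n with
  | zero => simpa using h0
  | succ n =>
    have h := congrArg (PowerSeries.coeff n) hf
    rw [PowerSeries.coeff_derivative, PowerSeries.coeff_mul,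
      sum_eq_zero fun x hx => by
        rw [ih x.2 (by rw [HasAntidiagonal.mem_antidiagonal] at hx; omega), map_zero, mul_zero],
      ← Nat.cast_succ, mul_comm, ← nsmul_eq_mul, ← smul_zero (n + 1)] at h
    exact (smul_right_inj n.succ_ne_zero).1 h

lemma inv_factorial_succ_mul {K : Type*} [Field K] [CharZero K] (n : ℕ) :
    ((n + 1).factorial : K)⁻¹ * (n + 1) = (n.factorial : K)⁻¹ := by
  rw [Nat.factorial_succ]
  push_cast
  field_simp

lemma inv_factorial_mul_choose {K : Type*} [Field K] [CharZero K] {n k : ℕ} (h : k ≤ n) :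
    (n.factorial : K)⁻¹ * n.choose k = (k.factorial : K)⁻¹ * ((n - k).factorial : K)⁻¹ := by
  have : (n.factorial : K) ≠ 0 := Nat.cast_ne_zero.2 n.factorial_ne_zero
  rw [Nat.cast_choose K h]
  field_simp

lemma derivative_expSeries' (a : MvPolynomial (Fin 2) ℚ) :
    PowerSeries.derivative _ (expSeries' a) = PowerSeries.C a * expSeries' a := by
  refine PowerSeries.ext fun n => ?_
  rw [PowerSeries.coeff_derivative, PowerSeries.coeff_C_mul, expSeries', PowerSeries.coeff_mk,
    PowerSeries.coeff_mk, ← Nat.cast_succ, ← map_natCast MvPolynomial.C, Nat.cast_succ, pow_succ,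
    mul_comm, ← mul_assoc, ← map_mul, mul_comm _ ((n + 1).factorial : ℚ)⁻¹,
    inv_factorial_succ_mul]
  ring

@[simp] lemma constantCoeff_expSeries' (a : MvPolynomial (Fin 2) ℚ) :
    PowerSeries.constantCoeff (expSeries' a) = 1 := by
  simp [expSeries', ← PowerSeries.coeff_zero_eq_constantCoeff_apply]

@[simp] lemma constantCoeff_permutoEGF : PowerSeries.constantCoeff permutoEGF = 0 := by
  simp [permutoEGF, ← PowerSeries.coeff_zero_eq_constantCoeff_apply]

lemma coeff_one_add_C_mul_permutoEGF (c : MvPolynomial (Fin 2) ℚ) (j : ℕ) :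
    PowerSeries.coeff j (1 + PowerSeries.C c * permutoEGF) =
      MvPolynomial.C ((j.factorial : ℚ)⁻¹) *
        if j = 0 then 1 else c * eulerianPoly (X 0) (X 1) j := by
  cases j with
  | zero => simp [permutoEGF]
  | succ j =>
    simp [permutoEGF, PowerSeries.coeff_one, permutoH_eq_eulerianPoly]
    ring

lemma derivative_permutoEGF :
    PowerSeries.derivative _ permutoEGF =
      (1 + PowerSeries.C (X 1) * permutoEGF) * (1 + PowerSeries.C (X 0) * permutoEGF) := by
  refine PowerSeries.ext fun n => ?_
  have hcoeff : PowerSeries.coeff (n + 1) permutoEGF * ((n : MvPolynomial (Fin 2) ℚ) + 1) =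
      MvPolynomial.C ((n.factorial : ℚ)⁻¹) * eulerianPoly (X 0) (X 1) (n + 1) := by
    rw [permutoEGF, PowerSeries.coeff_mk, if_neg n.succ_ne_zero, Nat.add_sub_cancel,
      permutoH_eq_eulerianPoly, mul_right_comm, ← Nat.cast_succ, ← map_natCast MvPolynomial.C,
      ← map_mul, Nat.cast_succ, inv_factorial_succ_mul]
  rw [PowerSeries.coeff_derivative, hcoeff, eulerianPoly_succ, mul_sum, PowerSeries.coeff_mul,
    Finset.Nat.sum_antidiagonal_eq_sum_range_succ fun i j =>
      PowerSeries.coeff i (1 + PowerSeries.C (X 1) * permutoEGF) *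
        PowerSeries.coeff j (1 + PowerSeries.C (X 0) * permutoEGF)]
  refine sum_congr rfl fun k hk => ?_
  rw [coeff_one_add_C_mul_permutoEGF, coeff_one_add_C_mul_permutoEGF, nsmul_eq_mul,
    ← map_natCast MvPolynomial.C, ← mul_assoc, ← map_mul,
    inv_factorial_mul_choose (mem_range_succ_iff.1 hk), map_mul]
  ring

/-- `(α·e^{tx} − t·e^{αx})·H(x) = e^{αx} − e^{tx}`, i.e.
`H(x) = (e^{αx} − e^{tx})/(α·e^{tx} − t·e^{αx})`. -/
theorem permutoEGF_eq :
    (PowerSeries.C (R := MvPolynomial (Fin 2) ℚ) (MvPolynomial.X 0) * expSeries' (MvPolynomial.X 1) -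
        PowerSeries.C (R := MvPolynomial (Fin 2) ℚ) (MvPolynomial.X 1) *
          expSeries' (MvPolynomial.X 0)) * permutoEGF =
      expSeries' (MvPolynomial.X 0) - expSeries' (MvPolynomial.X 1) := by
  rw [← sub_eq_zero]
  refine PowerSeries.eq_zero_of_derivative_eq_mul (c := PowerSeries.C (X 0) + PowerSeries.C (X 1) +
    PowerSeries.C (X 0) * PowerSeries.C (X 1) * permutoEGF) ?_ (by simp)
  simp only [map_sub, Derivation.leibniz, smul_eq_mul, PowerSeries.derivative_C,
    derivative_expSeries', derivative_permutoEGF]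
  ring
end

section
/- Let G(x) = Σ_{n≥0} Γ_n(τ)·x^n be the ordinary generating function, as a formal power series over ℚ[τ], of the associahedron γ-polynomials Γ_n(τ) = Σ_{i=0}^{⌊n/2⌋} (1/(i+1))·binom(2i,i)·binom(n,2i)·τ^i. Then G satisfies the quadratic equation G = 1 + x·G + τ·x²·G². -/
/-!
The coefficient of `τ^k` in `Γ_n` is `Cat_k · C(n, 2k)`. Comparing coefficients of `x^(n+2) τ^(k+1)`,
the quadratic equation amounts to Pascal's rule together with
`Cat_{k+1} · C(n+1, 2k+1) = Σ_{a+b=n} Σ_{i+j=k} Cat_i Cat_j · C(a, 2i) · C(b, 2j)`,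
which follows from the Catalan recurrence and the identity
`Σ_{a+b=n} C(a, r) · C(b, s) = C(n+1, r+s+1)`: an `(r+s+1)`-subset of `{0, …, n}` is determined
by its `(r+1)`-st element `a` and the `r` elements below and `s` elements above it.
-/

open Finset Polynomial

/-- The γ-polynomial of the associahedron `As^n`:
`Γ_n(τ) = Σ_{i=0}^{⌊n/2⌋} (1/(i+1))·binom(2i,i)·binom(n,2i)·τ^i`. -/
noncomputable def gammaAs (n : ℕ) : Polynomial ℚ :=
  ∑ i ∈ Finset.range (n / 2 + 1),
    Polynomial.C ((1 / (i + 1 : ℚ)) * ((2 * i).choose i) * (n.choose (2 * i))) *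
      Polynomial.X ^ i

/-- The ordinary generating function `G(x) = Σ_{n≥0} Γ_n(τ)·x^n` over `ℚ[τ]`. -/
noncomputable def gammaAsSeries : PowerSeries (Polynomial ℚ) :=
  PowerSeries.mk fun n => gammaAs n

theorem Nat.sum_antidiagonal_choose_mul_choose (r s n : ℕ) :
    ∑ p ∈ antidiagonal n, p.1.choose r * p.2.choose s = (n + 1).choose (r + s + 1) := by
  induction n generalizing s with
  | zero => cases r <;> cases s <;> simp [Nat.choose_eq_zero_of_lt]
  | succ n ih =>
    rw [Nat.sum_antidiagonal_succ']
    cases s with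
    | zero =>
      have h := ih 0
      simp only [Nat.choose_zero_right, mul_one, add_zero] at h ⊢
      rw [h, ← Nat.choose_succ_succ']
    | succ s =>
      simp only [Nat.choose_succ_succ' _ s, mul_add, sum_add_distrib, ih, Nat.choose_zero_succ,
        mul_zero, zero_add]
      rw [← add_assoc, Nat.choose_succ_succ' (n + 1), add_comm]

theorem cast_catalan_eq_one_div_mul_choose {K : Type*} [Field K] [CharZero K] (n : ℕ) :
    (catalan n : K) = 1 / (n + 1) * (2 * n).choose n := by
  rw [← Nat.centralBinom_eq_two_mul_choose, ← succ_mul_catalan_eq_centralBinom]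
  push_cast
  field_simp

theorem sum_antidiagonal_catalan_mul_choose (n i : ℕ) :
    ∑ p ∈ antidiagonal n, ∑ q ∈ antidiagonal i,
        catalan q.1 * p.1.choose (2 * q.1) * (catalan q.2 * p.2.choose (2 * q.2)) =
      catalan (i + 1) * (n + 1).choose (2 * i + 1) := by
  rw [sum_comm, catalan_succ', sum_mul]
  refine sum_congr rfl fun q hq => ?_
  rw [← mem_antidiagonal.mp hq, mul_add, ← Nat.sum_antidiagonal_choose_mul_choose, mul_sum]
  exact sum_congr rfl fun _ _ => by ring

theorem coeff_gammaAs (n k : ℕ) : (gammaAs n).coeff k = catalan k * n.choose (2 * k) := by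
  simp only [gammaAs, finsetSum_coeff, coeff_C_mul_X_pow, sum_ite_eq, mem_range,
    cast_catalan_eq_one_div_mul_choose]
  split_ifs with hk
  · rfl
  · rw [Nat.choose_eq_zero_of_lt (by omega : n < 2 * k)]
    simp

theorem gammaAs_add_two (n : ℕ) :
    gammaAs (n + 2) = gammaAs (n + 1) + X * ∑ p ∈ antidiagonal n, gammaAs p.1 * gammaAs p.2 := by
  ext (_ | i)
  · simp [coeff_gammaAs]
  · have h := congrArg (Nat.cast (R := ℚ)) (sum_antidiagonal_catalan_mul_choose n i)
    push_cast at h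
    rw [coeff_add, coeff_X_mul, finsetSum_coeff]
    simp only [coeff_mul, coeff_gammaAs]
    rw [h, show 2 * (i + 1) = 2 * i + 1 + 1 by ring, Nat.choose_succ_succ' (n + 1)]
    push_cast
    ring

/-- `G = 1 + x·G + τ·x²·G²`. -/
theorem gammaAsSeries_quadratic :
    gammaAsSeries =
      1 + PowerSeries.X * gammaAsSeries +
        PowerSeries.C (R := Polynomial ℚ) Polynomial.X * PowerSeries.X ^ 2 * gammaAsSeries ^ 2 := by
  ext (_ | _ | n) : 1
  · simp [gammaAsSeries, gammaAs]
  · simp [gammaAsSeries, gammaAs, PowerSeries.coeff_one, mul_assoc, PowerSeries.coeff_X_pow_mul']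
  · rw [mul_assoc, map_add, map_add, PowerSeries.coeff_one, if_neg (by omega), zero_add,
      PowerSeries.coeff_succ_X_mul, PowerSeries.coeff_C_mul, show n + 1 + 1 = n + 2 from rfl,
      PowerSeries.coeff_X_pow_mul, sq, PowerSeries.coeff_mul]
    simpa only [gammaAsSeries, PowerSeries.coeff_mk] using gammaAs_add_two n
end

section
/- For all natural numbers n ≥ 1 and 1 ≤ i ≤ n: (1/(n+1))·binom(n+1,i)·binom(n+1,i+1) ≤ Σ_{k=i}^{n} binom(n,k)·A(k,i−1), where A(m,k) is the Eulerian number. -/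
open Finset
open scoped Classical

/-!
Write `N(n, i)` for the left-hand side (the Narayana number `h_i(As^n)`) and `T(n, i)` for the
right-hand side. They satisfy the same recursive inequality in opposite directions,
`N(n + 1, i + 1) ≤ (i + 2) N(n, i + 1) + N(n, i)` and
`(i + 2) T(n, i + 1) + T(n, i) ≤ T(n + 1, i + 1)`, so induction on `n` reduces the claim to the
boundary cases `i = n`, where `N(n, n) = 1 ≤ A(n, n - 1)`, and `i = 1`, where
`N(n, 1) = binom(n + 1, 2) = binom(n, 1) + binom(n, 2) ≤ T(n, 1)`.

The inequality for `T` follows by Pascal's rule from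
`(j + 1) A(k, j) + A(k, j - 1) ≤ A(k + 1, j)`: inserting the new maximal letter into a permutation
of `k` letters at the end or right after one of its `j` descents keeps the number of descents,
while inserting it in front adds one. The inequality for `N` is a computation with ratios of
neighbouring binomial coefficients.
-/

noncomputable def descentSet (m : ℕ) (σ : Equiv.Perm (Fin m)) : Finset ℕ :=
  (range m).filter fun i => ∃ h : i + 1 < m, σ ⟨i + 1, h⟩ < σ ⟨i, Nat.lt_of_succ_lt h⟩

theorem numDescents_eq_card_descentSet (m : ℕ) (σ : Equiv.Perm (Fin m)) :
    numDescents m σ = #(descentSet m σ) := rfl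

theorem mem_descentSet {m t : ℕ} {σ : Equiv.Perm (Fin m)} :
    t ∈ descentSet m σ ↔
      ∃ h : t + 1 < m, σ ⟨t + 1, h⟩ < σ ⟨t, Nat.lt_of_succ_lt h⟩ := by
  simp only [descentSet, mem_filter, mem_range, and_iff_right_iff_imp]
  exact fun ⟨h, _⟩ => Nat.lt_of_succ_lt h

theorem one_le_eulerian_zero (m : ℕ) : 1 ≤ eulerian m 0 := by
  refine one_le_card.2
    ⟨1, mem_filter.2 ⟨mem_univ _, card_eq_zero.2 (filter_eq_empty_iff.2 ?_)⟩⟩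
  rintro t - ⟨_, hlt⟩
  simp [Fin.lt_def] at hlt

theorem one_le_eulerian_sub_one (m : ℕ) : 1 ≤ eulerian m (m - 1) := by
  refine one_le_card.2 ⟨Fin.revPerm, mem_filter.2 ⟨mem_univ _, ?_⟩⟩
  rw [numDescents_eq_card_descentSet, ← card_range (m - 1)]
  congr 1
  ext t
  simp only [mem_descentSet, mem_range, Fin.revPerm_apply, Fin.rev_lt_rev, Fin.mk_lt_mk]
  exact ⟨fun ⟨h, _⟩ => by omega, fun ht => ⟨by omega, Nat.lt_succ_self t⟩⟩

theorem eulerian_self {m : ℕ} (hm : 0 < m) : eulerian m m = 0 := by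
  refine card_eq_zero.2 (filter_eq_empty_iff.2 fun σ _ => ne_of_lt ?_)
  calc numDescents m σ ≤ #(range (m - 1)) := card_le_card fun t ht => by
        have := (mem_descentSet.1 ht).1
        rw [mem_range]; omega
    _ < m := by rw [card_range]; omega

section InsertMax

variable {k : ℕ} (σ : Equiv.Perm (Fin k)) (p : Fin (k + 1))

/-- The permutation whose one-line notation is that of `σ` with the new maximal letter `k`
inserted at position `p`. -/
def insertMax : Equiv.Perm (Fin (k + 1)) :=
  (finSuccEquiv' p).trans ((Equiv.optionCongr σ).trans finSuccEquivLast.symm)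

@[simp]
theorem insertMax_apply_self : insertMax σ p p = Fin.last k := by
  simp [insertMax]

@[simp]
theorem insertMax_apply_succAbove (s : Fin k) :
    insertMax σ p (p.succAbove s) = (σ s).castSucc := by
  simp [insertMax]

theorem insertMax_injective :
    Function.Injective fun x : Equiv.Perm (Fin k) × Fin (k + 1) => insertMax x.1 x.2 := by
  rintro ⟨σ, p⟩ ⟨σ', p'⟩ h
  have hp : p = p' := (insertMax σ' p').injective <| by
    simp only at h
    rw [insertMax_apply_self, ← h, insertMax_apply_self]
  subst hp
  refine Prod.ext (Equiv.ext fun s => Fin.castSucc_injective _ ?_) rfl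
  simpa using congrArg (fun τ : Equiv.Perm (Fin (k + 1)) => τ (p.succAbove s)) h

theorem insertMax_apply_of_lt {s : ℕ} (hsp : s < (p : ℕ)) (hsk : s < k) :
    insertMax σ p ⟨s, by omega⟩ = (σ ⟨s, hsk⟩).castSucc := by
  rw [← insertMax_apply_succAbove, Fin.succAbove_of_castSucc_lt _ _ hsp]
  rfl

theorem insertMax_apply_succ_of_le {s : ℕ} (hps : (p : ℕ) ≤ s) (hsk : s < k) :
    insertMax σ p ⟨s + 1, by omega⟩ = (σ ⟨s, hsk⟩).castSucc := by
  rw [← insertMax_apply_succAbove, Fin.succAbove_of_le_castSucc _ _ hps]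
  rfl

theorem mem_descentSet_insertMax_of_succ_lt {t : ℕ} (ht : t + 1 < (p : ℕ)) :
    t ∈ descentSet (k + 1) (insertMax σ p) ↔ t ∈ descentSet k σ := by
  have htk : t + 1 < k := by omega
  simp only [mem_descentSet, exists_prop_of_true (by omega : t + 1 < k + 1),
    exists_prop_of_true htk, insertMax_apply_of_lt σ p ht htk,
    insertMax_apply_of_lt σ p (by omega : t < p) (by omega), Fin.castSucc_lt_castSucc_iff]

theorem notMem_descentSet_insertMax_of_succ_eq {t : ℕ} (ht : t + 1 = (p : ℕ)) :
    t ∉ descentSet (k + 1) (insertMax σ p) := by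
  intro h
  obtain ⟨h, hlt⟩ := mem_descentSet.1 h
  rw [show (⟨t + 1, h⟩ : Fin (k + 1)) = p from Fin.ext ht, insertMax_apply_self] at hlt
  exact absurd hlt (not_lt.2 (Fin.le_last _))

theorem mem_descentSet_insertMax_self :
    (p : ℕ) ∈ descentSet (k + 1) (insertMax σ p) ↔ (p : ℕ) < k := by
  refine ⟨fun h => by simpa using (mem_descentSet.1 h).1,
    fun hpk => mem_descentSet.2 ⟨by omega, ?_⟩⟩
  rw [insertMax_apply_succ_of_le σ p le_rfl hpk, Fin.eta, insertMax_apply_self]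
  exact Fin.castSucc_lt_last _

theorem mem_descentSet_insertMax_succ_of_le {s : ℕ} (hs : (p : ℕ) ≤ s) :
    s + 1 ∈ descentSet (k + 1) (insertMax σ p) ↔ s ∈ descentSet k σ := by
  simp only [mem_descentSet]
  constructor
  · rintro ⟨h, hlt⟩
    refine ⟨by omega, ?_⟩
    rwa [insertMax_apply_succ_of_le σ p (by omega : (p : ℕ) ≤ s + 1) (by omega),
      insertMax_apply_succ_of_le σ p hs (by omega), Fin.castSucc_lt_castSucc_iff] at hlt
  · rintro ⟨h, hlt⟩
    refine ⟨by omega, ?_⟩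
    rwa [insertMax_apply_succ_of_le σ p (by omega : (p : ℕ) ≤ s + 1) h,
      insertMax_apply_succ_of_le σ p hs (by omega), Fin.castSucc_lt_castSucc_iff]

theorem descentSet_insertMax :
    descentSet (k + 1) (insertMax σ p) =
      (descentSet k σ).image (fun t : ℕ => if t + 1 < (p : ℕ) then t else t + 1) ∪
        ({(p : ℕ)} : Finset ℕ).filter (· < k) := by
  ext t
  simp only [mem_union, mem_image, mem_filter, mem_singleton]
  constructor
  · intro ht
    rcases lt_trichotomy (t + 1) p with hlt | heq | hgt
    · exact Or.inl ⟨t, (mem_descentSet_insertMax_of_succ_lt σ p hlt).1 ht, if_pos hlt⟩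
    · exact absurd ht (notMem_descentSet_insertMax_of_succ_eq σ p heq)
    obtain rfl | hpt := eq_or_lt_of_le (Nat.le_of_lt_succ hgt)
    · exact Or.inr ⟨rfl, (mem_descentSet_insertMax_self σ p).1 ht⟩
    obtain ⟨s, rfl⟩ := Nat.exists_eq_add_of_lt hpt
    refine Or.inl ⟨p + s, (mem_descentSet_insertMax_succ_of_le σ p (by omega)).1 ht, if_neg ?_⟩
    omega
  · rintro (⟨s, hs, rfl⟩ | ⟨rfl, hpk⟩)
    · by_cases hsp : s + 1 < p
      · rwa [if_pos hsp, mem_descentSet_insertMax_of_succ_lt σ p hsp]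
      rw [if_neg hsp]
      obtain heq | hps := eq_or_lt_of_le (not_lt.1 hsp)
      · have hpk : (p : ℕ) < k := by have := (mem_descentSet.1 hs).1; omega
        rw [← heq]
        exact (mem_descentSet_insertMax_self σ p).2 hpk
      · exact (mem_descentSet_insertMax_succ_of_le σ p (by omega)).2 hs
    · exact (mem_descentSet_insertMax_self σ p).2 hpk

theorem ite_add_one_lt_injective (p : ℕ) :
    Function.Injective fun t : ℕ => if t + 1 < p then t else t + 1 := by
  intro a b h
  simp only at h
  split_ifs at h <;> omega

theorem numDescents_insertMax_of_mem
    (hp : (p : ℕ) ∈ insert k ((descentSet k σ).image (· + 1))) :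
    numDescents (k + 1) (insertMax σ p) = numDescents k σ := by
  rw [numDescents_eq_card_descentSet, numDescents_eq_card_descentSet, descentSet_insertMax,
    union_eq_left.2, card_image_of_injective _ (ite_add_one_lt_injective p)]
  intro t ht
  obtain ⟨rfl, hpk⟩ := by simpa using ht
  obtain hpk' | ⟨d, hd, hdp⟩ := by simpa using hp
  · omega
  · exact mem_image.2 ⟨d, hd, by simp [hdp]⟩

theorem numDescents_insertMax_zero (hk : 0 < k) :
    numDescents (k + 1) (insertMax σ 0) = numDescents k σ + 1 := by
  rw [numDescents_eq_card_descentSet, numDescents_eq_card_descentSet, descentSet_insertMax,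
    card_union_of_disjoint, card_image_of_injective _ (ite_add_one_lt_injective _)]
  · simp [filter_singleton, hk]
  · simp [disjoint_left]

theorem numDescents_add_one_le_card_insertMax :
    numDescents k σ + 1 ≤
      #{p : Fin (k + 1) | numDescents (k + 1) (insertMax σ p) = numDescents k σ} := by
  set S := insert k ((descentSet k σ).image (· + 1))
  have hS : ∀ t ∈ S, t < k + 1 := by
    intro t ht
    obtain rfl | ⟨d, hd, rfl⟩ := by simpa [S] using ht
    · omega
    · have := (mem_descentSet.1 hd).1; omega
  have hcard : #S = numDescents k σ + 1 := by
    rw [card_insert_of_notMem, card_image_of_injective _ (add_left_injective 1),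
      numDescents_eq_card_descentSet]
    intro hk
    obtain ⟨d, hd, hdk⟩ := mem_image.1 hk
    have := (mem_descentSet.1 hd).1
    omega
  calc numDescents k σ + 1 = #(S.attachFin hS) := by rw [card_attachFin, hcard]
    _ ≤ _ := card_le_card fun p hp =>
      mem_filter.2 ⟨mem_univ _, numDescents_insertMax_of_mem σ p ((mem_attachFin hS).1 hp)⟩

end InsertMax

theorem succ_mul_eulerian_add_eulerian_pred_le {k j : ℕ} (hk : 0 < k) (hj : 0 < j) :
    (j + 1) * eulerian k j + eulerian k (j - 1) ≤ eulerian (k + 1) j := by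
  have fiber (σ : Equiv.Perm (Fin k)) :
      (j + 1) * (if numDescents k σ = j then 1 else 0) +
          (if numDescents k σ = j - 1 then 1 else 0) ≤
        #{p : Fin (k + 1) | numDescents (k + 1) (insertMax σ p) = j} := by
    by_cases h : numDescents k σ = j
    · rw [if_pos h, if_neg (by omega), ← h]
      simpa using numDescents_add_one_le_card_insertMax σ
    by_cases h' : numDescents k σ = j - 1
    · rw [if_neg h, if_pos h', mul_zero, zero_add, one_le_card]
      refine ⟨0, mem_filter.2 ⟨mem_univ _, ?_⟩⟩
      rw [numDescents_insertMax_zero σ hk, h']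
      omega
    · simp [h, h']
  calc (j + 1) * eulerian k j + eulerian k (j - 1)
      = ∑ σ : Equiv.Perm (Fin k), ((j + 1) * (if numDescents k σ = j then 1 else 0) +
          (if numDescents k σ = j - 1 then 1 else 0)) := by
        simp only [eulerian, card_filter, sum_add_distrib, mul_sum]
    _ ≤ ∑ σ : Equiv.Perm (Fin k),
          #{p : Fin (k + 1) | numDescents (k + 1) (insertMax σ p) = j} :=
        sum_le_sum fun σ _ => fiber σ
    _ = #{x : Equiv.Perm (Fin k) × Fin (k + 1) | numDescents (k + 1) (insertMax x.1 x.2) = j} := by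
        simp only [card_filter, Fintype.sum_prod_type]
    _ = #(Finset.image (fun x => insertMax x.1 x.2)
          {x : Equiv.Perm (Fin k) × Fin (k + 1) | numDescents (k + 1) (insertMax x.1 x.2) = j}) :=
        (card_image_of_injective _ insertMax_injective).symm
    _ ≤ eulerian (k + 1) j := card_le_card fun τ hτ => by
        obtain ⟨x, hx, rfl⟩ := mem_image.1 hτ
        exact mem_filter.2 ⟨mem_univ _, (mem_filter.1 hx).2⟩

noncomputable def stellohedronH (n i : ℕ) : ℕ :=
  ∑ k ∈ Icc i n, n.choose k * eulerian k (i - 1)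

theorem one_le_stellohedronH_self (n : ℕ) : 1 ≤ stellohedronH n n := by
  simpa [stellohedronH] using one_le_eulerian_sub_one n

theorem choose_two_le_stellohedronH_one (n : ℕ) : (n + 1).choose 2 ≤ stellohedronH n 1 :=
  calc (n + 1).choose 2 = ∑ k ∈ Icc 1 2, n.choose k := by
        simp [Nat.choose_succ_succ, sum_Icc_succ_top]
    _ ≤ ∑ k ∈ Icc 1 n, n.choose k := sum_le_sum_of_ne_zero fun k hk hne => by
        have := Nat.choose_ne_zero_iff.1 hne
        simp only [mem_Icc] at hk ⊢
        omega
    _ ≤ stellohedronH n 1 :=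
        sum_le_sum fun k _ => Nat.le_mul_of_pos_right _ (one_le_eulerian_zero k)

theorem stellohedronH_succ_ge {n i : ℕ} (hi : 0 < i) (hin : i ≤ n) :
    (i + 2) * stellohedronH n (i + 1) + stellohedronH n i ≤ stellohedronH (n + 1) (i + 1) := by
  have hpascal : stellohedronH (n + 1) (i + 1) =
      stellohedronH n (i + 1) + ∑ k ∈ Icc i n, n.choose k * eulerian (k + 1) i := by
    have hshift : ∑ k ∈ Icc (i + 1) (n + 1), n.choose (k - 1) * eulerian k i =
        ∑ k ∈ Icc i n, n.choose k * eulerian (k + 1) i := by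
      rw [← map_add_right_Icc, sum_map]
      simp
    have hlast :
        ∑ k ∈ Icc (i + 1) (n + 1), n.choose k * eulerian k i = stellohedronH n (i + 1) := by
      rw [sum_Icc_succ_top (by omega), Nat.choose_succ_self, zero_mul, add_zero, stellohedronH,
        Nat.add_sub_cancel]
    rw [← hshift, ← hlast, ← sum_add_distrib, stellohedronH, Nat.add_sub_cancel]
    refine sum_congr rfl fun k hk => ?_
    rw [Nat.choose_succ_left _ _ (by simp only [mem_Icc] at hk; omega)]
    ring
  have hrec : ∑ k ∈ Icc i n, n.choose k * ((i + 1) * eulerian k i + eulerian k (i - 1)) ≤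
      ∑ k ∈ Icc i n, n.choose k * eulerian (k + 1) i :=
    sum_le_sum fun k hk => Nat.mul_le_mul_left _
      (succ_mul_eulerian_add_eulerian_pred_le (by simp only [mem_Icc] at hk; omega) hi)
  have hsplit : ∑ k ∈ Icc i n, n.choose k * ((i + 1) * eulerian k i + eulerian k (i - 1)) =
      (i + 1) * ∑ k ∈ Icc i n, n.choose k * eulerian k i + stellohedronH n i := by
    rw [stellohedronH, mul_sum, ← sum_add_distrib]
    exact sum_congr rfl fun k _ => by ring
  have hdrop : ∑ k ∈ Icc i n, n.choose k * eulerian k i = stellohedronH n (i + 1) := by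
    rw [← insert_Icc_add_one_left_eq_Icc hin, sum_insert (by simp), eulerian_self hi, mul_zero,
      zero_add, stellohedronH, Nat.add_sub_cancel]
  calc (i + 2) * stellohedronH n (i + 1) + stellohedronH n i
      = stellohedronH n (i + 1) +
          ∑ k ∈ Icc i n, n.choose k * ((i + 1) * eulerian k i + eulerian k (i - 1)) := by
        rw [hsplit, hdrop]; ring
    _ ≤ stellohedronH n (i + 1) + ∑ k ∈ Icc i n, n.choose k * eulerian (k + 1) i :=
        Nat.add_le_add_left hrec _
    _ = stellohedronH (n + 1) (i + 1) := hpascal.symm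

def associahedronH (n i : ℕ) : ℚ :=
  1 / ((n : ℚ) + 1) * (n + 1).choose i * (n + 1).choose (i + 1)

theorem associahedronH_self (n : ℕ) : associahedronH n n = 1 := by
  rw [associahedronH, Nat.choose_succ_self_right, Nat.choose_self]
  push_cast
  field_simp

theorem associahedronH_one (n : ℕ) : associahedronH n 1 = (n + 1).choose 2 := by
  rw [associahedronH, Nat.choose_one_right]
  push_cast
  field_simp

theorem associahedronH_succ_le {n i : ℕ} (hin : i < n) :
    associahedronH (n + 1) (i + 1) ≤ (i + 2) * associahedronH n (i + 1) + associahedronH n i := by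
  obtain ⟨d, hd⟩ : ∃ d, n = i + d + 1 := ⟨n - i - 1, by omega⟩
  have hnq : (n : ℚ) = i + d + 1 := by exact_mod_cast hd
  have e0 : ((n + 1).choose i : ℚ) = (n + 1).choose (i + 1) * (i + 1) / (d + 2) := by
    have := Nat.choose_succ_right_eq (n + 1) i
    rw [show n + 1 - i = d + 2 by omega] at this
    rw [eq_div_iff (by positivity)]; exact_mod_cast this.symm
  have e2 : ((n + 1).choose (i + 1 + 1) : ℚ) = (n + 1).choose (i + 1) * (d + 1) / (i + 2) := by
    have := Nat.choose_succ_right_eq (n + 1) (i + 1)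
    rw [show n + 1 - (i + 1) = d + 1 by omega] at this
    rw [eq_div_iff (by positivity)]; exact_mod_cast this
  have e3 : ((n + 1 + 1).choose (i + 1) : ℚ) = (n + 1).choose (i + 1) * (n + 2) / (d + 2) := by
    have := Nat.choose_mul_succ_eq (n + 1) (i + 1)
    rw [show n + 1 + 1 - (i + 1) = d + 2 by omega] at this
    rw [eq_div_iff (by positivity)]; exact_mod_cast this.symm
  have e4 : ((n + 1 + 1).choose (i + 1 + 1) : ℚ) =
      (n + 1 + 1).choose (i + 1) * (d + 2) / (i + 2) := by
    have := Nat.choose_succ_right_eq (n + 1 + 1) (i + 1)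
    rw [show n + 1 + 1 - (i + 1) = d + 2 by omega] at this
    rw [eq_div_iff (by positivity)]; exact_mod_cast this
  simp only [associahedronH]
  push_cast
  rw [e0, e2, e4, e3, hnq, ← sub_nonneg]
  generalize ((n + 1).choose (i + 1) : ℚ) = c
  convert (by positivity :
      (0 : ℚ) ≤ c ^ 2 * (i + 1) * d * (d + 1) / ((i + d + 2) * (d + 2) * (i + 2))) using 1
  field_simp
  ring

theorem associahedronH_le_stellohedronH {n i : ℕ} (hi : 0 < i) (hin : i ≤ n) :
    associahedronH n i ≤ stellohedronH n i := by
  induction n generalizing i with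
  | zero => omega
  | succ n ih =>
    obtain rfl | hin := eq_or_lt_of_le hin
    · rw [associahedronH_self]
      exact_mod_cast one_le_stellohedronH_self (n + 1)
    obtain rfl | ⟨j, hj, rfl⟩ : i = 1 ∨ ∃ j, 0 < j ∧ i = j + 1 := by
      rcases i with _ | _ | j <;> simp_all
    · rw [associahedronH_one]
      exact_mod_cast choose_two_le_stellohedronH_one (n + 1)
    calc associahedronH (n + 1) (j + 1)
        ≤ (j + 2) * associahedronH n (j + 1) + associahedronH n j :=
          associahedronH_succ_le (by omega)
      _ ≤ (j + 2) * stellohedronH n (j + 1) + stellohedronH n j := by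
        gcongr
        · exact ih (by omega) (by omega)
        · exact ih hj (by omega)
      _ ≤ stellohedronH (n + 1) (j + 1) := by exact_mod_cast stellohedronH_succ_ge hj (by omega)

theorem associahedron_le_stellohedron_h_general (n i : ℕ) (hi1 : 1 ≤ i) (hi : i ≤ n) :
    (1 / ((n : ℚ) + 1)) * ((n + 1).choose i : ℚ) * ((n + 1).choose (i + 1) : ℚ) ≤
      ∑ k ∈ Finset.Icc i n, ((n.choose k : ℚ) * (eulerian k (i - 1) : ℚ)) := by
  have h := associahedronH_le_stellohedronH hi1 hi
  rw [associahedronH, stellohedronH] at h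
  exact_mod_cast h

/-- `h_i(As^n) ≤ h_i(St^n)`: for `n ≥ 1` and `1 ≤ i ≤ n`,
`(1/(n+1))·binom(n+1,i)·binom(n+1,i+1) ≤ Σ_{k=i}^{n} binom(n,k)·A(k,i−1)`. -/
theorem associahedron_le_stellohedron_h (n i : ℕ) (hn : 1 ≤ n) (hi1 : 1 ≤ i) (hi : i ≤ n) :
    (1 / ((n : ℚ) + 1)) * ((n + 1).choose i : ℚ) * ((n + 1).choose (i + 1) : ℚ) ≤
      ∑ k ∈ Finset.Icc i n, ((n.choose k : ℚ) * (eulerian k (i - 1) : ℚ)) :=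
  associahedron_le_stellohedron_h_general n i hi1 hi
end
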